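/- For n ≥ 1 and α, β ∈ (0,1], the measure P(C) = Z_n^{-1} Σ_{T ∈ R^{-1}{C}} α^{-l(T)} β^{-r(T)} is stationary for the open-boundary TASEP, where l(T) (resp. r(T)) is the number of internal vertices on the path from the leftmost (resp. rightmost) leaf to the root, and Z_n = Σ_{T ∈ T_n} α^{-l(T)} β^{-r(T)}. -/

import Mathlib

/-- Plane binary trees: every internal vertex has exactly two ordered children. -/
inductive PTree where
  | leaf : PTree
  | node : PTree → PTree → PTree
  deriving DecidableEq

namespace PTree

/-- number of leaves (endpoints) -/
def numLeaves : PTree → ℕ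
  | leaf => 1
  | node l r => numLeaves l + numLeaves r

/-- directions of the leaves of a subtree which is itself a `b`-child
(`true` = left child, `false` = right child), in left-to-right order. -/
def dirsAux : PTree → Bool → List Bool
  | leaf, b => [b]
  | node l r, _ => dirsAux l true ++ dirsAux r false

/-- the left/right-child directions of all leaves of a tree, left to right
(`true` = left child, `false` = right child). -/
def dirs : PTree → List Bool
  | leaf => []
  | node l r => dirsAux l true ++ dirsAux r false

/-- The reduction map `R`: the directions of the 2nd through (n+1)-th leaves;
`true` = • (occupied site, left child), `false` = ∘ (empty site, right child). -/
def red (T : PTree) : List Bool := ((dirs T).drop 1).dropLast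

/-- number of internal vertices on the path from the leftmost leaf to the root
(root included). -/
def lCount : PTree → ℕ
  | leaf => 0
  | node l _ => lCount l + 1

/-- number of internal vertices on the path from the rightmost leaf to the root
(root included). -/
def rCount : PTree → ℕ
  | leaf => 0
  | node _ r => rCount r + 1

/-- number of last branching vertices (internal vertices whose two children are leaves). -/
def lbCount : PTree → ℕ
  | leaf => 0
  | node leaf leaf => 1
  | node l r => lbCount l + lbCount r

end PTree

/-- Marked plane binary trees: a plane binary tree with exactly one of its
last branching vertices marked (the constructor `mark` is the marked vertex,
a vertex with two leaf children). -/
inductive MTree where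
  | mark : MTree
  | nodeL : MTree → PTree → MTree
  | nodeR : PTree → MTree → MTree
  deriving DecidableEq

namespace MTree

/-- forgetful map to plane binary trees -/
def forget : MTree → PTree
  | mark => .node .leaf .leaf
  | nodeL l r => .node (forget l) r
  | nodeR l r => .node l (forget r)

/-- collapse the marked vertex (with its two leaf children) to a single leaf. -/
def collapseT : MTree → PTree
  | mark => .leaf
  | nodeL l r => .node (collapseT l) r
  | nodeR l r => .node l (collapseT r)

/-- index (left to right, starting from 0) of the leaf of `collapseT` obtained
by collapsing the marked vertex. -/
def markIdx : MTree → ℕ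
  | mark => 0
  | nodeL l _ => markIdx l
  | nodeR l r => l.numLeaves + markIdx r

end MTree

/-- replace the `i`-th leaf of a tree by a marked last branching vertex. -/
def expand : PTree → ℕ → MTree
  | .leaf, _ => .mark
  | .node l r, i =>
      if i < l.numLeaves then .nodeL (expand l i) r
      else .nodeR l (expand r (i - l.numLeaves))

/-- index of the next right-child (`false`) leaf strictly after position `i`;
if there is none, the index of the rightmost left-child (`true`) leaf. -/
def nextFalseIdx (w : List Bool) (i : ℕ) : ℕ :=
  if (w.drop (i+1)).findIdx (fun b => !b) < (w.drop (i+1)).length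
  then i + 1 + (w.drop (i+1)).findIdx (fun b => !b)
  else w.length - 1 - (w.reverse.findIdx (fun b => b))

/-- index of the closest left-child (`true`) leaf strictly before position `i`;
if there is none, the index of the leftmost right-child (`false`) leaf. -/
def prevTrueIdx (w : List Bool) (i : ℕ) : ℕ :=
  if ((w.take i).reverse).findIdx (fun b => b) < i
  then i - 1 - ((w.take i).reverse).findIdx (fun b => b)
  else w.findIdx (fun b => !b)

/-- position of the leaf where the removed segment is re-glued by `π`. -/
def target (w : List Bool) (i : ℕ) : ℕ :=
  if w.getD i true then prevTrueIdx w i else nextFalseIdx w i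

/-- The map `π` on marked trees: remove the segment joining the marked vertex to
its left (resp. right) leaf when the marked vertex is a right (resp. left) child,
and glue it to the next right- (resp. left-) child leaf to the right (resp. left),
with the boundary rule when no such leaf exists; the new vertex is marked. -/
def piM (M : MTree) : MTree :=
  expand M.collapseT (target M.collapseT.dirs M.markIdx)

open Classical in
/-- Transition rates of the `n`-site open-boundary TASEP, on configurations
encoded as lists of booleans (`true` = •, `false` = ∘). -/
noncomputable def rate (α β : ℝ) (C C' : List Bool) : ℝ :=
  if ∃ A, C = false :: A ∧ C' = true :: A then α
  else if ∃ A, C = A ++ [true] ∧ C' = A ++ [false] then β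
  else if ∃ A A', C = A ++ true :: false :: A' ∧ C' = A ++ false :: true :: A' then 1
  else 0

/-- number of active bonds of a configuration: injection at site 1 if empty,
extraction at site n if occupied, and hops across •∘ pairs. -/
def activeCount (C : List Bool) : ℕ :=
  (if C.head? = some false then 1 else 0) +
  ((C.zip C.tail).count (true, false)) +
  (if C.getLast? = some true then 1 else 0)

/-- the weight `μ(T) = α^{-l(T)} β^{-r(T)}` of a plane binary tree. -/
noncomputable def mu (α β : ℝ) (T : PTree) : ℝ :=
  α ^ (-(T.lCount : ℤ)) * β ^ (-(T.rCount : ℤ))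

/-- number of internal vertices on the path from the leftmost leaf to the root,
excluding the marked vertex. -/
def lCountM : MTree → ℕ
  | .mark => 0
  | .nodeL l _ => lCountM l + 1
  | .nodeR l _ => l.lCount + 1

/-- number of internal vertices on the path from the rightmost leaf to the root,
excluding the marked vertex. -/
def rCountM : MTree → ℕ
  | .mark => 0
  | .nodeR _ r => rCountM r + 1
  | .nodeL _ r => r.rCount + 1

/-- the weight `μ̂` of a marked tree, excluding the marked vertex from the counts. -/
noncomputable def muHat (α β : ℝ) (M : MTree) : ℝ :=
  α ^ (-(lCountM M : ℤ)) * β ^ (-(rCountM M : ℤ))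

/-!
Let `W(w)` be the total weight `μ` of the trees reducing to `w`. Splitting the `i`-th leaf of a
tree into a cherry replaces the `i`-th letter of its leaf-direction word by `•∘`, and is a
bijection onto the trees whose word has `•∘` at positions `i, i+1`; it multiplies `μ` by `α⁻¹` at
the leftmost leaf, by `β⁻¹` at the rightmost one, and leaves it unchanged elsewhere. Hence `W`
satisfies the relations of the matrix ansatz:
`α W(∘w) = W(w)`, `β W(w•) = W(w)`, `W(A•∘B) = W(A•B) + W(A∘B)`.
Any such `W` is stationary: with `ψ_j = ±W(C with site j deleted)`, the sign being `+` iff site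
`j` is occupied, the net flows into `C` through the left boundary, the bond `(j, j+1)` and the
right boundary are `ψ_0`, `ψ_{j+1} - ψ_j` and `-ψ_{n-1}`, and they add up to zero.
-/

namespace PTree

/-- Replace the `i`-th leaf (counted from `0`, left to right) by a cherry. -/
def splitLeaf : PTree → ℕ → PTree
  | leaf, _ => node leaf leaf
  | node l r, i =>
      if i < l.numLeaves then node (l.splitLeaf i) r else node l (r.splitLeaf (i - l.numLeaves))

lemma numLeaves_pos (T : PTree) : 0 < T.numLeaves := by
  induction T with
  | leaf => simp [numLeaves]
  | node l r _ _ => simp only [numLeaves]; omega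

lemma length_dirsAux (T : PTree) (b : Bool) : (T.dirsAux b).length = T.numLeaves := by
  induction T generalizing b with
  | leaf => rfl
  | node l r ihl ihr => simp [dirsAux, numLeaves, ihl, ihr]

lemma head?_dirsAux (T : PTree) (b : Bool) :
    (T.dirsAux b).head? = some (if T = leaf then b else true) := by
  induction T generalizing b with
  | leaf => rfl
  | node l r ihl _ =>
    simp only [dirsAux, List.head?_append, ihl true]
    cases l <;> simp

lemma getLast?_dirsAux (T : PTree) (b : Bool) :
    (T.dirsAux b).getLast? = some (if T = leaf then b else false) := by
  induction T generalizing b with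
  | leaf => rfl
  | node l r _ ihr =>
    simp only [dirsAux, List.getLast?_append, ihr false]
    cases r <;> simp

lemma numLeaves_splitLeaf (T : PTree) (i : ℕ) : (T.splitLeaf i).numLeaves = T.numLeaves + 1 := by
  induction T generalizing i with
  | leaf => rfl
  | node l r ihl ihr =>
    unfold splitLeaf
    split <;> simp only [numLeaves, ihl, ihr] <;> omega

lemma dirsAux_splitLeaf {T : PTree} {i : ℕ} (h : i < T.numLeaves) (b : Bool) :
    (T.splitLeaf i).dirsAux b =
      (T.dirsAux b).take i ++ true :: false :: (T.dirsAux b).drop (i + 1) := by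
  induction T generalizing b i with
  | leaf =>
    obtain rfl : i = 0 := by simpa [numLeaves] using h
    rfl
  | node l r ihl ihr =>
    have hl := length_dirsAux l true
    unfold splitLeaf
    split
    · rename_i hi
      simp [dirsAux, ihl hi, List.drop_append_of_le_length, hl, hi.le, Nat.succ_le_of_lt hi]
    · rename_i hi
      have hr : i - l.numLeaves < r.numLeaves := by simp only [numLeaves] at h; omega
      simp [dirsAux, ihr hr, List.take_append, List.drop_append, hl, List.take_of_length_le,
        List.drop_eq_nil_of_le, not_lt.mp hi, Nat.le_succ_of_le (not_lt.mp hi),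
        show i + 1 - l.numLeaves = i - l.numLeaves + 1 by omega]

lemma lCount_splitLeaf_zero (T : PTree) : (T.splitLeaf 0).lCount = T.lCount + 1 := by
  induction T with
  | leaf => rfl
  | node l r ihl _ => simp [splitLeaf, numLeaves_pos, lCount, ihl]

lemma lCount_splitLeaf {T : PTree} {i : ℕ} (hi : 0 < i) (h : i < T.numLeaves) :
    (T.splitLeaf i).lCount = T.lCount := by
  induction T generalizing i with
  | leaf => simp [numLeaves] at h; omega
  | node l r ihl _ =>
    unfold splitLeaf
    split
    · simp only [lCount, ihl hi ‹_›]
    · rfl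

lemma rCount_splitLeaf {T : PTree} {i : ℕ} (h : i + 1 < T.numLeaves) :
    (T.splitLeaf i).rCount = T.rCount := by
  induction T generalizing i with
  | leaf => simp [numLeaves] at h
  | node l r _ ihr =>
    unfold splitLeaf
    split
    · rfl
    · simp only [numLeaves] at h
      simp only [rCount, ihr (show i - l.numLeaves + 1 < r.numLeaves by omega)]

lemma rCount_splitLeaf_of_le {T : PTree} {i : ℕ} (h : T.numLeaves ≤ i + 1) :
    (T.splitLeaf i).rCount = T.rCount + 1 := by
  induction T generalizing i with
  | leaf => rfl
  | node l r _ ihr =>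
    have := r.numLeaves_pos
    simp only [numLeaves] at h
    simp [splitLeaf, show ¬ i < l.numLeaves by omega, rCount,
      ihr (show r.numLeaves ≤ i - l.numLeaves + 1 by omega)]

lemma splitLeaf_ne_leaf (T : PTree) (i : ℕ) : T.splitLeaf i ≠ leaf := by
  cases T with
  | leaf => simp [splitLeaf]
  | node l r => simp only [splitLeaf]; split <;> simp

lemma splitLeaf_injective (i : ℕ) : Function.Injective (splitLeaf · i) := by
  intro T T' h
  induction T generalizing T' i with
  | leaf =>
    cases T' with
    | leaf => rfl
    | node l r =>
      simp only [splitLeaf] at h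
      split_ifs at h <;> simp only [node.injEq] at h
      exacts [(splitLeaf_ne_leaf _ _ h.1.symm).elim, (splitLeaf_ne_leaf _ _ h.2.symm).elim]
  | node l r ihl ihr =>
    cases T' with
    | leaf =>
      simp only [splitLeaf] at h
      split_ifs at h <;> simp only [node.injEq] at h
      exacts [(splitLeaf_ne_leaf _ _ h.1).elim, (splitLeaf_ne_leaf _ _ h.2).elim]
    | node l' r' =>
      simp only [splitLeaf] at h
      split_ifs at h with hi hi' hi' <;> simp only [node.injEq] at h <;> obtain ⟨hl, hr⟩ := h
      · rw [ihl i hl, hr]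
      · have := congrArg numLeaves hl; rw [numLeaves_splitLeaf] at this; omega
      · have := congrArg numLeaves hl; rw [numLeaves_splitLeaf] at this; omega
      · subst hl
        rw [ihr _ hr]

lemma exists_splitLeaf_eq {T : PTree} {b : Bool} {u v : List Bool}
    (h : T.dirsAux b = u ++ true :: false :: v) :
    ∃ (S : PTree) (x : Bool), S.dirsAux b = u ++ x :: v ∧ S.splitLeaf u.length = T := by
  induction T generalizing b u v with
  | leaf => have := congrArg List.length h; simp [dirsAux] at this; omega
  | node l r ihl ihr =>
    have hl := length_dirsAux l true
    simp only [dirsAux] at h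
    have of_right : ∀ as, u = l.dirsAux true ++ as →
        r.dirsAux false = as ++ true :: false :: v →
        ∃ (S : PTree) (x : Bool), S.dirsAux b = u ++ x :: v ∧
          S.splitLeaf u.length = l.node r := by
      rintro as rfl hr
      obtain ⟨S, x, hS, rfl⟩ := ihr hr
      refine ⟨l.node S, x, by simp [dirsAux, hS], ?_⟩
      simp [splitLeaf, hl]
    rcases List.append_eq_append_iff.mp h with ⟨as, hu, hr⟩ | ⟨bs, hl', hv⟩
    · exact of_right as hu hr
    · match bs, hv with
      | [], hv => exact of_right [] (by simpa using hl'.symm) hv.symm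
      | [y], hv =>
        simp only [List.singleton_append, List.cons.injEq] at hv
        obtain ⟨rfl, hr⟩ := hv
        have hl_leaf : l = leaf := by
          have := getLast?_dirsAux l true
          rw [hl', List.getLast?_append] at this
          by_contra hne
          simp [hne] at this
        have hr_leaf : r = leaf := by
          have := head?_dirsAux r false
          rw [← hr] at this
          by_contra hne
          simp [hne] at this
        subst hl_leaf hr_leaf
        simp only [dirsAux, List.cons.injEq] at hl' hr
        obtain rfl : u = [] := by simpa using hl'
        obtain rfl : v = [] := hr.2
        exact ⟨leaf, b, rfl, rfl⟩
      | y :: z :: bs', hv =>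
        simp only [List.cons_append, List.cons.injEq] at hv
        obtain ⟨rfl, rfl, rfl⟩ := hv
        obtain ⟨S, x, hS, rfl⟩ := ihl hl'
        refine ⟨S.node r, x, by simp [dirsAux, hS], ?_⟩
        have := length_dirsAux S true
        simp only [hS, List.length_append, List.length_cons] at this
        simp [splitLeaf, show u.length < S.numLeaves by omega]

lemma image_splitLeaf (b : Bool) (u v : List Bool) :
    (splitLeaf · u.length) '' {S | ∃ x, S.dirsAux b = u ++ x :: v} =
      {T | T.dirsAux b = u ++ true :: false :: v} := by
  ext T
  constructor
  · rintro ⟨S, ⟨x, hS⟩, rfl⟩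
    have hu : u.length < S.numLeaves := by rw [← length_dirsAux S b, hS]; simp
    simp [dirsAux_splitLeaf hu, hS]
  · intro hT
    obtain ⟨S, x, hS, rfl⟩ := exists_splitLeaf_eq hT
    exact ⟨S, ⟨x, hS⟩, rfl⟩

lemma finite_setOf_numLeaves_le (m : ℕ) : {T : PTree | T.numLeaves ≤ m}.Finite := by
  induction m with
  | zero =>
    refine Set.finite_empty.subset fun T (h : T.numLeaves ≤ 0) => ?_
    have := T.numLeaves_pos
    omega
  | succ m ih =>
    refine (((ih.prod ih).image fun p => node p.1 p.2).insert leaf).subset ?_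
    rintro (_ | ⟨l, r⟩) h
    · simp
    · have := l.numLeaves_pos; have := r.numLeaves_pos
      simp only [Set.mem_ofPred_eq, numLeaves] at h
      exact Or.inr ⟨(l, r), ⟨by simp only [Set.mem_ofPred_eq]; omega,
        by simp only [Set.mem_ofPred_eq]; omega⟩, rfl⟩

lemma finite_setOf_dirsAux_eq (b : Bool) (d : List Bool) :
    {T : PTree | T.dirsAux b = d}.Finite :=
  (finite_setOf_numLeaves_le d.length).subset fun T (hT : T.dirsAux b = d) => by
    show T.numLeaves ≤ d.length
    rw [← hT, length_dirsAux]

lemma numLeaves_eq_and_red_eq_iff {T : PTree} {w : List Bool} :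
    T.numLeaves = w.length + 2 ∧ T.red = w ↔ T.dirsAux true = true :: (w ++ [false]) := by
  cases T with
  | leaf => simp [numLeaves, dirsAux]
  | node l r =>
    have hd : (node l r).dirs = (node l r).dirsAux true := rfl
    rw [red, hd, ← length_dirsAux _ true]
    constructor
    · rintro ⟨hlen, rfl⟩
      obtain ⟨ys, hys⟩ := List.getLast?_eq_some_iff.mp
        (show _ = some false by simpa using getLast?_dirsAux (node l r) true)
      obtain ⟨zs, hzs⟩ := List.head?_eq_some_iff.mp
        (show _ = some true by simpa using head?_dirsAux (node l r) true)
      rw [hys] at hzs hlen ⊢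
      cases ys with
      | nil => simp at hlen
      | cons y ys =>
        obtain rfl : y = true := by simpa using congrArg List.head? hzs
        simp
    · intro h
      simp [h]

end PTree

open PTree

lemma mu_splitLeaf_zero (α β : ℝ) {T : PTree} (h : 1 < T.numLeaves) :
    mu α β (T.splitLeaf 0) = α⁻¹ * mu α β T := by
  simp only [mu, lCount_splitLeaf_zero, rCount_splitLeaf (show 0 + 1 < T.numLeaves from h),
    zpow_neg, zpow_natCast, pow_succ, mul_inv]
  ring

lemma mu_splitLeaf_last (α β : ℝ) {T : PTree} {i : ℕ} (hi : 0 < i)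
    (h : i + 1 = T.numLeaves) :
    mu α β (T.splitLeaf i) = β⁻¹ * mu α β T := by
  simp only [mu, lCount_splitLeaf hi (show i < T.numLeaves by omega), rCount_splitLeaf_of_le h.ge,
    zpow_neg, zpow_natCast, pow_succ, mul_inv]
  ring

lemma mu_splitLeaf (α β : ℝ) {T : PTree} {i : ℕ} (hi : 0 < i) (h : i + 1 < T.numLeaves) :
    mu α β (T.splitLeaf i) = mu α β T := by
  simp only [mu, lCount_splitLeaf hi (show i < T.numLeaves by omega), rCount_splitLeaf h]

/-- The weight of the fibre `R⁻¹{w}`. The word `dirsAux T true` equals `dirs T` except on the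
one-leaf tree, and with it the cherry-splitting bijection holds without exceptions. -/
noncomputable def fiberWeight (α β : ℝ) (w : List Bool) : ℝ :=
  ∑ᶠ T ∈ {T : PTree | T.dirsAux true = true :: (w ++ [false])}, mu α β T

lemma finsum_dirsAux_eq_finsum_splitLeaf (g : PTree → ℝ) (b : Bool) (u v : List Bool) :
    ∑ᶠ T ∈ {T : PTree | T.dirsAux b = u ++ true :: false :: v}, g T =
      ∑ᶠ S ∈ {S : PTree | ∃ x, S.dirsAux b = u ++ x :: v}, g (S.splitLeaf u.length) := by
  rw [← image_splitLeaf, finsum_mem_image (splitLeaf_injective _).injOn]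

lemma mul_fiberWeight_false_cons {α : ℝ} (hα : α ≠ 0) (β : ℝ) (w : List Bool) :
    α * fiberWeight α β (false :: w) = fiberWeight α β w := by
  have hset : {S : PTree | ∃ x, S.dirsAux true = [] ++ x :: (w ++ [false])} =
      {S | S.dirsAux true = true :: (w ++ [false])} := by
    ext S
    refine ⟨fun ⟨x, hx⟩ => ?_, fun h => ⟨true, h⟩⟩
    have := head?_dirsAux S true
    simp_all
  rw [fiberWeight, fiberWeight, List.cons_append, ← List.nil_append (true :: _),
    finsum_dirsAux_eq_finsum_splitLeaf, hset, mul_finsum_mem]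
  refine finsum_mem_congr rfl fun S hS => ?_
  have hlen : S.numLeaves = w.length + 2 := by
    rw [← length_dirsAux S true, hS]; simp
  rw [List.length_nil, mu_splitLeaf_zero α β (by omega), mul_inv_cancel_left₀ hα]

lemma mul_fiberWeight_append_true {β : ℝ} (hβ : β ≠ 0) (α : ℝ) (w : List Bool) :
    β * fiberWeight α β (w ++ [true]) = fiberWeight α β w := by
  have hset : {S : PTree | ∃ x, S.dirsAux true = (true :: w) ++ [x]} =
      {S | S.dirsAux true = true :: (w ++ [false])} := by
    ext S
    refine ⟨fun ⟨x, hx⟩ => ?_, fun h => ⟨false, by simpa using h⟩⟩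
    cases S with
    | leaf => simp [dirsAux] at hx
    | node l r =>
      have := getLast?_dirsAux (node l r) true
      rw [hx, List.getLast?_concat] at this
      simp_all
  rw [fiberWeight, fiberWeight,
    show true :: (w ++ [true] ++ [false]) = (true :: w) ++ true :: false :: [] by simp,
    finsum_dirsAux_eq_finsum_splitLeaf, hset, mul_finsum_mem]
  refine finsum_mem_congr rfl fun S hS => ?_
  have hlen : S.numLeaves = w.length + 2 := by
    rw [← length_dirsAux S true, hS]; simp
  rw [mu_splitLeaf_last α β (by simp) (by simp [hlen]), mul_inv_cancel_left₀ hβ]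

lemma fiberWeight_true_false (α β : ℝ) (A B : List Bool) :
    fiberWeight α β (A ++ true :: false :: B) =
      fiberWeight α β (A ++ true :: B) + fiberWeight α β (A ++ false :: B) := by
  have hset : {S : PTree | ∃ x, S.dirsAux true = (true :: A) ++ x :: (B ++ [false])} =
      {S | S.dirsAux true = true :: (A ++ true :: B ++ [false])} ∪
        {S | S.dirsAux true = true :: (A ++ false :: B ++ [false])} := by
    ext S
    simp [Bool.exists_bool, or_comm]
  have hdisj : Disjoint {S : PTree | S.dirsAux true = true :: (A ++ true :: B ++ [false])}
      {S | S.dirsAux true = true :: (A ++ false :: B ++ [false])} :=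
    Set.disjoint_left.mpr fun S h₁ h₂ => by simp_all
  rw [fiberWeight, fiberWeight, fiberWeight,
    show true :: (A ++ true :: false :: B ++ [false]) =
      (true :: A) ++ true :: false :: (B ++ [false]) by simp,
    finsum_dirsAux_eq_finsum_splitLeaf, hset, ← finsum_mem_union hdisj
      (finite_setOf_dirsAux_eq _ _) (finite_setOf_dirsAux_eq _ _)]
  refine finsum_mem_congr rfl fun S hS => ?_
  have hlen : S.numLeaves = A.length + B.length + 3 := by
    rcases hS with hS | hS <;> (rw [← length_dirsAux S true, hS]; simp; omega)
  exact mu_splitLeaf α β (by simp) (by simp [hlen])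

lemma finsum_red_eq_fiberWeight (α β : ℝ) {n : ℕ} {w : List Bool} (hw : w.length = n) :
    ∑ᶠ T : {T : PTree // T.numLeaves = n + 2 ∧ T.red = w}, mu α β T.val =
      fiberWeight α β w := by
  subst hw
  rw [finsum_subtype_eq_finsum_cond]
  simp_rw [numLeaves_eq_and_red_eq_iff]
  rfl

lemma List.exists_eq_append_cons_cons {α : Type*} {X : List α} {j : ℕ}
    (h : j + 1 < X.length) :
    ∃ A a b B, A.length = j ∧ X = A ++ a :: b :: B :=
  ⟨X.take j, X[j], X[j + 1], X.drop (j + 2), by simp; omega, by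
    rw [← List.drop_eq_getElem_cons h, ← List.drop_eq_getElem_cons, List.take_append_drop]⟩

def SwapAt {α : Type*} (j : ℕ) (a b : α) (X Y : List α) : Prop :=
  ∃ A B, A.length = j ∧ X = A ++ a :: b :: B ∧ Y = A ++ b :: a :: B

section SwapAt

variable {α : Type*} {j j' : ℕ} {a b : α} {X Y : List α}

lemma swapAt_comm : SwapAt j a b X Y ↔ SwapAt j b a Y X := by
  simp only [SwapAt, and_comm (a := X = _)]

lemma swapAt_iff :
    SwapAt j a b X Y ↔ (X[j]? = some a ∧ X[j + 1]? = some b) ∧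
      Y = X.take j ++ b :: a :: X.drop (j + 2) := by
  constructor
  · rintro ⟨A, B, rfl, rfl, rfl⟩
    simp
  · rintro ⟨⟨ha, hb⟩, rfl⟩
    obtain ⟨A, a', b', B, rfl, rfl⟩ :=
      List.exists_eq_append_cons_cons (List.getElem?_eq_some_iff.mp hb).1
    obtain rfl : a' = a := by simpa using ha
    obtain rfl : b' = b := by simpa [List.getElem?_append_right] using hb
    exact ⟨A, B, rfl, rfl, by simp⟩

lemma SwapAt.getElem?_eq (h : SwapAt j' a b X Y) (hj : j < j') : X[j]? = Y[j]? := by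
  obtain ⟨A, B, rfl, rfl, rfl⟩ := h
  simp [List.getElem?_append_left hj]

lemma SwapAt.unique (hab : a ≠ b) (h : SwapAt j a b X Y) (h' : SwapAt j' a b X Y) : j = j' := by
  have hX := (swapAt_iff.mp h).1.1
  have hY := (swapAt_iff.mp (swapAt_comm.mp h)).1.1
  have hX' := (swapAt_iff.mp h').1.1
  have hY' := (swapAt_iff.mp (swapAt_comm.mp h')).1.1
  rcases lt_trichotomy j j' with hj | rfl | hj
  · have := h'.getElem?_eq hj
    rw [hX, hY, Option.some_inj] at this
    exact absurd this hab
  · rfl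
  · have := h.getElem?_eq hj
    rw [hX', hY', Option.some_inj] at this
    exact absurd this hab

end SwapAt

open Classical in
lemma ite_exists_swapAt {α M : Type*} [AddCommMonoid M] {a b : α} (hab : a ≠ b) (X Y : List α)
    (c : M) :
    (if ∃ j, SwapAt j a b X Y then c else 0) =
      ∑ j ∈ Finset.range (X.length - 1), if SwapAt j a b X Y then c else 0 := by
  split_ifs with h
  · obtain ⟨j, hj⟩ := h
    have hlt : j < X.length - 1 := by
      have := (List.getElem?_eq_some_iff.mp (swapAt_iff.mp hj).1.2).1
      omega
    rw [Finset.sum_eq_single_of_mem j (Finset.mem_range.mpr hlt), if_pos hj]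
    exact fun k _ hk => if_neg fun h' => hk (h'.unique hab hj)
  · exact (Finset.sum_eq_zero fun k _ => if_neg fun h' => h ⟨k, h'⟩).symm

def IsInjection (X Y : List Bool) : Prop := ∃ A, X = false :: A ∧ Y = true :: A

def IsExtraction (X Y : List Bool) : Prop := ∃ A, X = A ++ [true] ∧ Y = A ++ [false]

def IsHop (X Y : List Bool) : Prop := ∃ j, SwapAt j true false X Y

section Transitions

variable {X Y : List Bool}

lemma isInjection_iff : IsInjection X Y ↔ X.head? = some false ∧ Y = true :: X.tail := by
  constructor
  · rintro ⟨A, rfl, rfl⟩; simp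
  · rintro ⟨h, rfl⟩
    obtain ⟨A, rfl⟩ := List.head?_eq_some_iff.mp h
    exact ⟨A, rfl, rfl⟩

lemma isInjection_iff' : IsInjection X Y ↔ Y.head? = some true ∧ X = false :: Y.tail := by
  constructor
  · rintro ⟨A, rfl, rfl⟩; simp
  · rintro ⟨h, rfl⟩
    obtain ⟨A, rfl⟩ := List.head?_eq_some_iff.mp h
    exact ⟨A, rfl, rfl⟩

lemma isExtraction_iff :
    IsExtraction X Y ↔ X.getLast? = some true ∧ Y = X.dropLast ++ [false] := by
  constructor
  · rintro ⟨A, rfl, rfl⟩; simp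
  · rintro ⟨h, rfl⟩
    obtain ⟨A, rfl⟩ := List.getLast?_eq_some_iff.mp h
    exact ⟨A, rfl, by simp⟩

lemma isExtraction_iff' :
    IsExtraction X Y ↔ Y.getLast? = some false ∧ X = Y.dropLast ++ [true] := by
  constructor
  · rintro ⟨A, rfl, rfl⟩; simp
  · rintro ⟨h, rfl⟩
    obtain ⟨A, rfl⟩ := List.getLast?_eq_some_iff.mp h
    exact ⟨A, by simp, rfl⟩

lemma isHop_iff : IsHop X Y ↔ ∃ j, SwapAt j true false X Y := Iff.rfl

lemma isHop_iff' : IsHop X Y ↔ ∃ j, SwapAt j false true Y X :=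
  exists_congr fun _ => swapAt_comm

lemma IsInjection.not_isExtraction (h : IsInjection X Y) : ¬ IsExtraction X Y := by
  obtain ⟨A, rfl, rfl⟩ := h
  rintro ⟨B, hX, hY⟩
  cases B <;> simp_all

lemma IsInjection.not_isHop (h : IsInjection X Y) : ¬ IsHop X Y := by
  obtain ⟨A, rfl, rfl⟩ := h
  rintro ⟨j, B, C, -, hX, hY⟩
  cases B <;> simp_all

lemma IsExtraction.not_isHop (h : IsExtraction X Y) : ¬ IsHop X Y := by
  obtain ⟨A, rfl, rfl⟩ := h
  rintro ⟨j, B, C, -, hX, hY⟩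
  have hX' := congrArg List.getLast? hX
  have hY' := congrArg List.getLast? hY
  rcases C.eq_nil_or_concat' with rfl | ⟨C, c, rfl⟩
  · simp [List.getLast?_append] at hX'
  · rw [← List.cons_append, ← List.cons_append, ← List.append_assoc, List.getLast?_concat,
      List.getLast?_concat] at hX' hY'
    simp_all

end Transitions

open Classical in
lemma rate_eq_add (α β : ℝ) (X Y : List Bool) :
    rate α β X Y = (if IsInjection X Y then α else 0) + (if IsExtraction X Y then β else 0) +
      if IsHop X Y then 1 else 0 := by
  have hhop :
      (∃ A A', X = A ++ true :: false :: A' ∧ Y = A ++ false :: true :: A') ↔ IsHop X Y :=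
    ⟨fun ⟨A, A', h⟩ => ⟨_, A, A', rfl, h⟩, fun ⟨_, A, A', _, h⟩ => ⟨A, A', h⟩⟩
  rw [rate, ← IsInjection, ← IsExtraction, if_congr hhop rfl rfl]
  by_cases h₁ : IsInjection X Y
  · simp [h₁, h₁.not_isExtraction, h₁.not_isHop]
  by_cases h₂ : IsExtraction X Y
  · simp [h₁, h₂, h₂.not_isHop]
  · simp [h₁, h₂]

lemma sum_ofFn_ite_eq {α M : Type*} [Fintype α] [DecidableEq α] [AddCommMonoid M] {n : ℕ}
    {Z : List α} (hZ : Z.length = n) (p : Prop) [Decidable p] (f : List α → M) :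
    ∑ C : Fin n → α, (if p ∧ List.ofFn C = Z then f (List.ofFn C) else 0) =
      if p then f Z else 0 := by
  subst hZ
  have hC : ∀ C : Fin Z.length → α, List.ofFn C = Z ↔ C = fun i => Z[i.1] := fun C => by
    rw [← List.ofFn_inj, List.ofFn_getElem]
  simp_rw [hC]
  split_ifs with hp <;> simp [hp, List.ofFn_getElem]

noncomputable def outRate (α β : ℝ) (X : List Bool) : ℝ :=
  (if X.head? = some false then α else 0) + (if X.getLast? = some true then β else 0) +
    ∑ j ∈ Finset.range (X.length - 1),
      if X[j]? = some true ∧ X[j + 1]? = some false then 1 else 0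

noncomputable def inflow (G : List Bool → ℝ) (α β : ℝ) (X : List Bool) : ℝ :=
  (if X.head? = some true then G (false :: X.tail) * α else 0) +
    (if X.getLast? = some false then G (X.dropLast ++ [true]) * β else 0) +
    ∑ j ∈ Finset.range (X.length - 1),
      if X[j]? = some false ∧ X[j + 1]? = some true then
        G (X.take j ++ true :: false :: X.drop (j + 2)) else 0

open Classical in
lemma sum_rate_ofFn {n : ℕ} (hn : 0 < n) {X : List Bool} (hX : X.length = n) (α β : ℝ) :
    ∑ C : Fin n → Bool, rate α β X (List.ofFn C) = outRate α β X := by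
  simp only [rate_eq_add, isHop_iff, ite_exists_swapAt (show true ≠ false by decide)]
  simp only [isInjection_iff, isExtraction_iff, swapAt_iff, Finset.sum_add_distrib]
  rw [Finset.sum_comm, sum_ofFn_ite_eq (by simp; omega) _ fun _ => α,
    sum_ofFn_ite_eq (by simp; omega) _ fun _ => β, outRate]
  congr 1
  refine Finset.sum_congr rfl fun j hj => sum_ofFn_ite_eq ?_ _ fun _ => 1
  simp at hj ⊢
  omega

open Classical in
lemma sum_mul_rate_ofFn {n : ℕ} (hn : 0 < n) {X : List Bool} (hX : X.length = n)
    (G : List Bool → ℝ) (α β : ℝ) :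
    ∑ C : Fin n → Bool, G (List.ofFn C) * rate α β (List.ofFn C) X = inflow G α β X := by
  simp only [rate_eq_add, isHop_iff', ite_exists_swapAt (show false ≠ true by decide)]
  simp only [isInjection_iff', isExtraction_iff', swapAt_iff, mul_add, Finset.mul_sum, mul_ite,
    mul_zero, mul_one, Finset.sum_add_distrib]
  rw [Finset.sum_comm, sum_ofFn_ite_eq (by simp; omega) _ fun Y => G Y * α,
    sum_ofFn_ite_eq (by simp; omega) _ fun Y => G Y * β, inflow]
  congr 1
  refine Finset.sum_congr rfl fun j hj => sum_ofFn_ite_eq ?_ _ G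
  simp at hj ⊢
  omega

noncomputable def signedErase (G : List Bool → ℝ) (X : List Bool) (j : ℕ) : ℝ :=
  (if X.getD j false then 1 else -1) * G (X.eraseIdx j)

theorem mul_outRate_eq_inflow {α β : ℝ} {G : List Bool → ℝ}
    (hA : ∀ v, α * G (false :: v) = G v) (hB : ∀ v, β * G (v ++ [true]) = G v)
    (hC : ∀ A B, G (A ++ true :: false :: B) = G (A ++ true :: B) + G (A ++ false :: B))
    {X : List Bool} (hX : X ≠ []) : G X * outRate α β X = inflow G α β X := by
  have hleft : (if X.head? = some true then G (false :: X.tail) * α else 0) -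
      G X * (if X.head? = some false then α else 0) = signedErase G X 0 := by
    obtain ⟨a, B, rfl⟩ := List.exists_cons_of_ne_nil hX
    cases a <;> simp [signedErase, ← hA B, mul_comm]
  have hright : (if X.getLast? = some false then G (X.dropLast ++ [true]) * β else 0) -
      G X * (if X.getLast? = some true then β else 0) = -signedErase G X (X.length - 1) := by
    obtain ⟨A, a, rfl⟩ := X.eq_nil_or_concat'.resolve_left hX
    cases a <;> simp [signedErase, List.eraseIdx_append_of_length_le, ← hB A, mul_comm]
  have hbulk : ∀ j ∈ Finset.range (X.length - 1),
      (if X[j]? = some false ∧ X[j + 1]? = some true then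
        G (X.take j ++ true :: false :: X.drop (j + 2)) else 0) -
      G X * (if X[j]? = some true ∧ X[j + 1]? = some false then 1 else 0) =
        signedErase G X (j + 1) - signedErase G X j := by
    intro j hj
    rw [Finset.mem_range] at hj
    obtain ⟨A, a, b, B, rfl, rfl⟩ := List.exists_eq_append_cons_cons (X := X) (j := j) (by omega)
    cases a <;> cases b <;> simp [signedErase, List.eraseIdx_append_of_length_le, hC] <;> ring
  have htel := Finset.sum_range_sub (signedErase G X) (X.length - 1)
  rw [← Finset.sum_congr rfl hbulk, Finset.sum_sub_distrib, ← Finset.mul_sum] at htel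
  rw [outRate, inflow]
  linear_combination -(hleft + hright + htel)

/-- `P(C) = Z_n⁻¹ Σ_{T ∈ R⁻¹{C}} α^{-l(T)} β^{-r(T)}` is a stationary
measure of the open-boundary TASEP with parameters `α, β ∈ (0,1]`. -/
theorem stationary_general (n : ℕ) (hn : 1 ≤ n) (α β : ℝ)
    (hα : α ∈ Set.Ioc (0:ℝ) 1) (hβ : β ∈ Set.Ioc (0:ℝ) 1) (C : Fin n → Bool) :
    ((∑ᶠ T : {T : PTree // T.numLeaves = n + 2 ∧ T.red = List.ofFn C}, mu α β T.val) /
          (∑ᶠ T : {T : PTree // T.numLeaves = n + 2}, mu α β T.val)) *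
        (∑ C' : Fin n → Bool, rate α β (List.ofFn C) (List.ofFn C'))
      = ∑ C' : Fin n → Bool,
          ((∑ᶠ T : {T : PTree // T.numLeaves = n + 2 ∧ T.red = List.ofFn C'}, mu α β T.val) /
              (∑ᶠ T : {T : PTree // T.numLeaves = n + 2}, mu α β T.val)) *
            rate α β (List.ofFn C') (List.ofFn C) := by
  simp only [finsum_red_eq_fiberWeight, List.length_ofFn, div_mul_eq_mul_div, ← Finset.sum_div]
  rw [sum_rate_ofFn hn List.length_ofFn, sum_mul_rate_ofFn hn List.length_ofFn,
    mul_outRate_eq_inflow (mul_fiberWeight_false_cons hα.1.ne' β)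
      (mul_fiberWeight_append_true hβ.1.ne' α) (fiberWeight_true_false α β)
      (List.ne_nil_of_length_pos (by rwa [List.length_ofFn]))]
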